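/- Theorem 2.1(b). Fix t ∈ ℝ. Suppose x ∈ 𝓑_{ε1,ε2}, the separation condition σ(t) ≥ 2α/(φ'_k(t) − φ'_{k−1}(t)) holds for all t and k = 1,…,K, and 2M(t)(τ0 + λ_0(t)) ≤ μ(t). Let ε̃1 satisfy M(t)(τ0 + λ_0(t)) ≤ ε̃1 ≤ μ(t) − M(t)(τ0 + λ_0(t)), and for 1 ≤ ℓ ≤ K let η̂_ℓ(t) = argmax_{η ∈ 𝓖_{t,ℓ}} |Ṽ_x(t,η)|. Then for each ℓ = 1,…,K, |η̂_ℓ(t) − φ'_ℓ(t)| ≤ (1/σ(t)) · |ĝ|^{−1}(1 − 2 err_ℓ(t)/A_ℓ(t)). -/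

import Mathlib

/-!
Near `t`, each component `x_k` differs from the pure tone `x_k(t) e^{2πi φ'_k(t)(s - t)}` by at
most `A_k(t) (ε1 |s - t| + π ε2 (s - t)²)` (amplitude bound plus second-order Taylor bound for the
phase), and the adaptive STFT of that tone is `x_k(t) ĝ(σ(t)(η - φ'_k(t)))`. Integrating against the
window, `Ṽ_x(t, η)` is within `M λ_0 + Σ_{k≠ℓ} A_k |ĝ(σ(t)(η - φ'_k(t)))|` of
`x_ℓ(t) ĝ(σ(t)(η - φ'_ℓ(t)))`, and for `|η - φ'_ℓ(t)| < α/σ(t)` the separation condition puts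
`σ(t)|η - φ'_k(t)| ≥ α(2|ℓ - k| - 1)`, so this error is at most `err_ℓ(t)`.

At `η = φ'_ℓ(t)` this gives `|Ṽ_x| ≥ A_ℓ - err_ℓ > ε̃1`, so `φ'_ℓ(t) ∈ 𝓖_{t,ℓ}` and the maximiser
satisfies `A_ℓ |ĝ(σ(t)(η̂_ℓ - φ'_ℓ(t)))| + err_ℓ ≥ A_ℓ - err_ℓ`. Hence `|ĝ|` at
`σ(t)|η̂_ℓ - φ'_ℓ(t)| < α` is at least `1 - 2 err_ℓ/A_ℓ ≥ τ0 = |ĝ(α)|`, and the intermediate value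
theorem turns this into the bound through `|ĝ|^{-1}`.
-/

open MeasureTheory Real

noncomputable section

/-- The adaptive short-time Fourier transform with time-varying window width `σ`. -/
def aSTFT (x : ℝ → ℂ) (g : ℝ → ℝ) (σ : ℝ → ℝ) (t η : ℝ) : ℂ :=
  ∫ τ : ℝ, x (t + τ) * (((σ t)⁻¹ * g (τ / σ t) : ℝ) : ℂ) *
    Complex.exp (-(2 * (π : ℂ) * η * τ) * Complex.I)

/-- The Fourier transform `ĝ` of the window `g`. -/
def hatg (g : ℝ → ℝ) (ξ : ℝ) : ℂ :=
  ∫ τ : ℝ, (g τ : ℂ) * Complex.exp (-(2 * (π : ℂ) * ξ * τ) * Complex.I)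

/-- The absolute moments `I_n = ∫ |τ^n g(τ)| dτ` of the window. -/
def momentI (g : ℝ → ℝ) (n : ℕ) : ℝ := ∫ τ : ℝ, |τ| ^ n * |g τ|

/-- The `k`-th component `x_k(s) = A_k(s) e^{2πi φ_k(s)}`. -/
def xcomp (A φ : ℕ → ℝ → ℝ) (k : ℕ) (s : ℝ) : ℂ :=
  (A k s : ℂ) * Complex.exp ((2 * (π : ℂ) * φ k s) * Complex.I)

/-- `M(t) = Σ_{k=0}^K A_k(t)`. -/
def Msum (K : ℕ) (A : ℕ → ℝ → ℝ) (t : ℝ) : ℝ := ∑ k ∈ Finset.range (K + 1), A k t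

/-- `μ(t) = min_{0 ≤ k ≤ K} A_k(t)`. -/
def muMin (K : ℕ) (A : ℕ → ℝ → ℝ) (t : ℝ) : ℝ :=
  (Finset.range (K + 1)).inf' (by simp) fun k => A k t

/-- `λ_0(t) = ε1 I_1 σ(t) + π ε2 I_2 σ(t)²`. -/
def lam0 (g : ℝ → ℝ) (σ : ℝ → ℝ) (ε1 ε2 t : ℝ) : ℝ :=
  ε1 * momentI g 1 * σ t + π * ε2 * momentI g 2 * σ t ^ 2

/-- `err_ℓ(t) = M(t)λ_0(t) + Σ_{k≠ℓ} A_k(t) |ĝ(α(2|ℓ−k|−1))|`. -/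
def errl (K : ℕ) (A : ℕ → ℝ → ℝ) (g : ℝ → ℝ) (σ : ℝ → ℝ) (α ε1 ε2 : ℝ)
    (l : ℕ) (t : ℝ) : ℝ :=
  Msum K A t * lam0 g σ ε1 ε2 t +
    ∑ k ∈ (Finset.range (K + 1)).erase l,
      A k t * ‖hatg g (α * (2 * |(l : ℝ) - (k : ℝ)| - 1))‖

/-- `𝓖_t = {η : |Ṽ_x(t,η)| > ε̃1}`. -/
def Gt (x : ℝ → ℂ) (g : ℝ → ℝ) (σ : ℝ → ℝ) (t eps : ℝ) : Set ℝ :=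
  {η | eps < ‖aSTFT x g σ t η‖}

/-- `𝓖_{t,k} = {η ∈ 𝓖_t : |η − φ'_k(t)| < α/σ(t)}`. -/
def Gtk (x : ℝ → ℂ) (g : ℝ → ℝ) (σ : ℝ → ℝ) (φ : ℕ → ℝ → ℝ) (α t eps : ℝ)
    (k : ℕ) : Set ℝ :=
  {η | η ∈ Gt x g σ t eps ∧ |η - deriv (φ k) t| < α / σ t}

open Set in
theorem abs_sub_sub_deriv_mul_le {f : ℝ → ℝ} {C : ℝ} (hf : ContDiff ℝ 2 f)
    (hf'' : ∀ s, |deriv (deriv f) s| ≤ C) (x h : ℝ) :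
    |f (x + h) - f x - deriv f x * h| ≤ C * h ^ 2 / 2 := by
  rcases eq_or_ne h 0 with rfl | hh
  · simp
  have hne : x ≠ x + h := by simpa using hh
  obtain ⟨c, -, hc⟩ := taylor_mean_remainder_lagrange_iteratedDeriv hne (n := 1) hf.contDiffOn
  have hlin : taylorWithinEval f 1 (uIcc x (x + h)) x (x + h) = f x + deriv f x * h := by
    simp [taylor_within_apply, mul_comm, ((hf.differentiable (by norm_num)) x).derivWithin
      (uniqueDiffOn_uIcc hne x left_mem_uIcc)]
  rw [sub_sub, ← hlin, hc, iteratedDeriv_succ, iteratedDeriv_one, abs_div, abs_mul]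
  simp only [add_sub_cancel_left, abs_pow]
  norm_num
  gcongr
  exact hf'' c

open FourierTransform in
theorem hatg_eq_fourier (g : ℝ → ℝ) : hatg g = 𝓕 (fun τ => (g τ : ℂ)) := by
  ext ξ
  rw [Real.fourier_real_eq_integral_exp_smul, hatg]
  congr 1; ext τ; rw [smul_eq_mul]; push_cast; ring_nf

section Window

variable {g : ℝ → ℝ}

theorem continuous_hatg (hg : Integrable g) : Continuous (hatg g) := by
  rw [hatg_eq_fourier]
  exact VectorFourier.fourierIntegral_continuous Real.continuous_fourierChar (by fun_prop) hg.ofReal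

theorem hatg_zero (hg : ∫ τ, g τ = 1) : hatg g 0 = 1 := by
  simp [hatg, integral_complex_ofReal, hg]

theorem integral_window_mul_exp {a : ℝ} (ha : 0 < a) (b : ℝ) :
    ∫ τ, ((a⁻¹ * g (τ / a) : ℝ) : ℂ) * Complex.exp (-(2 * (π : ℂ) * b * τ) * Complex.I) =
      hatg g (a * b) := by
  set F : ℝ → ℂ := fun u => (g u : ℂ) * Complex.exp (-(2 * (π : ℂ) * (a * b : ℝ) * u) * Complex.I)
  calc _ = a⁻¹ • ∫ τ, F (τ / a) := by
        rw [← integral_smul]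
        congr 1; ext τ
        have ha' : (a : ℂ) ≠ 0 := by exact_mod_cast ha.ne'
        simp only [F, Complex.real_smul]
        push_cast
        field_simp
    _ = hatg g (a * b) := by
        rw [Measure.integral_comp_div, abs_of_pos ha, smul_smul, inv_mul_cancel₀ ha.ne', one_smul]
        rfl

theorem integral_abs_pow_mul_window {a : ℝ} (ha : 0 < a) (n : ℕ) :
    ∫ τ, |τ| ^ n * |a⁻¹ * g (τ / a)| = a ^ n * momentI g n := by
  calc _ = a ^ n * a⁻¹ * ∫ τ, |τ / a| ^ n * |g (τ / a)| := by
        rw [← integral_const_mul]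
        congr 1; ext τ
        rw [abs_mul, abs_div, abs_inv, abs_of_pos ha, div_pow]
        field_simp
    _ = a ^ n * momentI g n := by
        rw [Measure.integral_comp_div (fun u => |u| ^ n * |g u|), abs_of_pos ha, smul_eq_mul,
          momentI]
        field_simp

theorem integrable_abs_pow_mul_window {a : ℝ} (ha : 0 < a) {n : ℕ}
    (hg : Integrable fun τ => τ ^ n * g τ) :
    Integrable fun τ => |τ| ^ n * |a⁻¹ * g (τ / a)| := by
  refine ((hg.abs.comp_div ha.ne').const_mul (a ^ n * a⁻¹)).congr (ae_of_all _ fun τ => ?_)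
  simp only [abs_mul, abs_pow, abs_div, abs_inv, abs_of_pos ha, div_pow]
  field_simp

end Window

def aSTFTIntegrand (x : ℝ → ℂ) (g σ : ℝ → ℝ) (t η τ : ℝ) : ℂ :=
  x (t + τ) * (((σ t)⁻¹ * g (τ / σ t) : ℝ) : ℂ) *
    Complex.exp (-(2 * (π : ℂ) * η * τ) * Complex.I)

def localTone (c : ℂ) (ν t s : ℝ) : ℂ :=
  c * Complex.exp (2 * (π : ℂ) * ((ν * (s - t) : ℝ) : ℂ) * Complex.I)

section aSTFT

variable {x y : ℝ → ℂ} {g σ : ℝ → ℝ} {t η : ℝ}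

theorem aSTFT_eq_integral : aSTFT x g σ t η = ∫ τ, aSTFTIntegrand x g σ t η τ := rfl

theorem integrable_aSTFTIntegrand (hx : Continuous x) {C : ℝ} (hC : ∀ s, ‖x s‖ ≤ C)
    (hg : Integrable g) (ht : σ t ≠ 0) (η : ℝ) : Integrable (aSTFTIntegrand x g σ t η) := by
  have hw : Integrable fun τ => (((σ t)⁻¹ * g (τ / σ t) : ℝ) : ℂ) :=
    ((hg.comp_div ht).const_mul _).ofReal
  have he : Continuous fun τ : ℝ => Complex.exp (-(2 * (π : ℂ) * η * τ) * Complex.I) := by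
    fun_prop
  refine (hw.bdd_mul (hx.comp (continuous_const_add t)).aestronglyMeasurable
    (ae_of_all _ fun τ => hC (t + τ))).mul_bdd (c := 1) he.aestronglyMeasurable
    (ae_of_all _ fun τ => ?_)
  simp [Complex.norm_exp]

theorem aSTFT_finset_sum {ι : Type*} (s : Finset ι) (x : ι → ℝ → ℂ)
    (hx : ∀ i ∈ s, Integrable (aSTFTIntegrand (x i) g σ t η)) :
    aSTFT (fun u => ∑ i ∈ s, x i u) g σ t η = ∑ i ∈ s, aSTFT (x i) g σ t η := by
  simp only [aSTFT_eq_integral]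
  rw [← integral_finsetSum s hx]
  simp only [aSTFTIntegrand, Finset.sum_mul]

theorem aSTFT_sub (hx : Integrable (aSTFTIntegrand x g σ t η))
    (hy : Integrable (aSTFTIntegrand y g σ t η)) :
    aSTFT (x - y) g σ t η = aSTFT x g σ t η - aSTFT y g σ t η := by
  simp only [aSTFT_eq_integral]
  rw [← integral_sub hx hy]
  simp only [aSTFTIntegrand, Pi.sub_apply, sub_mul]

theorem norm_aSTFT_le :
    ‖aSTFT x g σ t η‖ ≤ ∫ τ, ‖x (t + τ)‖ * |(σ t)⁻¹ * g (τ / σ t)| := by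
  refine (norm_integral_le_integral_norm _).trans (le_of_eq (integral_congr_ae
    (ae_of_all _ fun τ => ?_)))
  simp [Complex.norm_exp]

theorem aSTFT_localTone (ht : 0 < σ t) (c : ℂ) (ν : ℝ) :
    aSTFT (localTone c ν t) g σ t η = c * hatg g (σ t * (η - ν)) := by
  rw [← integral_window_mul_exp ht, ← integral_const_mul, aSTFT]
  congr 1; ext τ
  have hexp : Complex.exp (-(2 * (π : ℂ) * ((η - ν : ℝ) : ℂ) * τ) * Complex.I) =
      Complex.exp (2 * (π : ℂ) * ((ν * τ : ℝ) : ℂ) * Complex.I) *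
        Complex.exp (-(2 * (π : ℂ) * η * τ) * Complex.I) := by
    rw [← Complex.exp_add]; push_cast; ring_nf
  rw [localTone, add_sub_cancel_left, hexp]
  ring

end aSTFT

section Component

variable {A φ : ℕ → ℝ → ℝ} {k : ℕ}

theorem norm_xcomp (A φ : ℕ → ℝ → ℝ) (k : ℕ) (s : ℝ) : ‖xcomp A φ k s‖ = |A k s| := by
  simp [xcomp, Complex.norm_exp]

theorem continuous_xcomp (hA : Continuous (A k)) (hφ : Continuous (φ k)) :
    Continuous (xcomp A φ k) := by
  unfold xcomp; fun_prop

theorem norm_exp_mul_I_sub_exp_mul_I_le (a b : ℝ) :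
    ‖Complex.exp (a * Complex.I) - Complex.exp (b * Complex.I)‖ ≤ |a - b| := by
  have h : Complex.exp (a * Complex.I) - Complex.exp (b * Complex.I) =
      Complex.exp (b * Complex.I) * (Complex.exp (Complex.I * (a - b : ℝ)) - 1) := by
    rw [mul_sub, ← Complex.exp_add, mul_one]; push_cast; ring_nf
  rw [h, norm_mul, Complex.norm_exp_ofReal_mul_I, one_mul]
  exact Real.norm_exp_I_mul_ofReal_sub_one_le

theorem norm_xcomp_sub_localTone_le (A φ : ℕ → ℝ → ℝ) (k : ℕ) (t ν τ : ℝ) :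
    ‖xcomp A φ k (t + τ) - localTone (xcomp A φ k t) ν t (t + τ)‖ ≤
      |A k (t + τ) - A k t| + |A k t| * (2 * π * |φ k (t + τ) - φ k t - ν * τ|) := by
  have hsplit : xcomp A φ k (t + τ) - localTone (xcomp A φ k t) ν t (t + τ) =
      ((A k (t + τ) - A k t : ℝ) : ℂ) * Complex.exp ((2 * π * φ k (t + τ) : ℝ) * Complex.I) +
      (A k t : ℂ) * (Complex.exp ((2 * π * φ k (t + τ) : ℝ) * Complex.I) -
        Complex.exp ((2 * π * (φ k t + ν * τ) : ℝ) * Complex.I)) := by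
    simp only [xcomp, localTone, add_sub_cancel_left]
    rw [mul_assoc (A k t : ℂ), ← Complex.exp_add]
    push_cast; ring_nf
  rw [hsplit]
  refine (norm_add_le _ _).trans (add_le_add (le_of_eq ?_) ?_)
  · rw [norm_mul, Complex.norm_exp_ofReal_mul_I, mul_one, Complex.norm_real, Real.norm_eq_abs]
  · rw [norm_mul, Complex.norm_real, Real.norm_eq_abs]
    gcongr
    refine (norm_exp_mul_I_sub_exp_mul_I_le _ _).trans (le_of_eq ?_)
    rw [← mul_sub, abs_mul, abs_of_pos (by positivity : (0 : ℝ) < 2 * π), sub_add_eq_sub_sub]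

variable {g σ : ℝ → ℝ} {t ν ε1 ε2 : ℝ}

theorem norm_aSTFT_xcomp_sub_le (ht : 0 < σ t) (hA : Continuous (A k)) {C : ℝ}
    (hA_bdd : ∀ s, |A k s| ≤ C) (hφ : Continuous (φ k)) (hAt : 0 ≤ A k t)
    (hA_lip : ∀ τ, |A k (t + τ) - A k t| ≤ ε1 * |τ| * A k t)
    (hφ_taylor : ∀ τ, |φ k (t + τ) - φ k t - ν * τ| ≤ ε2 * τ ^ 2 / 2)
    (hg : Integrable g) (hg1 : Integrable fun τ => τ * g τ)
    (hg2 : Integrable fun τ => τ ^ 2 * g τ) (η : ℝ) :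
    ‖aSTFT (xcomp A φ k) g σ t η - xcomp A φ k t * hatg g (σ t * (η - ν))‖ ≤
      A k t * lam0 g σ ε1 ε2 t := by
  have hx := integrable_aSTFTIntegrand (continuous_xcomp hA hφ)
    (fun s => (norm_xcomp A φ k s).trans_le (hA_bdd s)) hg ht.ne' η
  have htone := integrable_aSTFTIntegrand (x := localTone (xcomp A φ k t) ν t)
    (by unfold localTone; fun_prop) (C := ‖xcomp A φ k t‖)
    (fun s => by simp [localTone, Complex.norm_exp]) hg ht.ne' η
  have hw1 := integrable_abs_pow_mul_window ht (n := 1) (by simpa using hg1)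
  have hw2 := integrable_abs_pow_mul_window ht hg2
  rw [← aSTFT_localTone ht, ← aSTFT_sub hx htone]
  calc _ ≤ ∫ τ, ‖(xcomp A φ k - localTone (xcomp A φ k t) ν t) (t + τ)‖ *
        |(σ t)⁻¹ * g (τ / σ t)| := norm_aSTFT_le
    _ ≤ ∫ τ, A k t * (ε1 * (|τ| ^ 1 * |(σ t)⁻¹ * g (τ / σ t)|) +
        π * ε2 * (|τ| ^ 2 * |(σ t)⁻¹ * g (τ / σ t)|)) := by
        refine integral_mono_of_nonneg (ae_of_all _ fun τ => by positivity)
          (((hw1.const_mul _).add (hw2.const_mul _)).const_mul _) (ae_of_all _ fun τ => ?_)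
        have hpt := norm_xcomp_sub_localTone_le A φ k t ν τ
        rw [abs_of_nonneg hAt] at hpt
        have hdiff : ‖(xcomp A φ k - localTone (xcomp A φ k t) ν t) (t + τ)‖ ≤
            A k t * (ε1 * |τ| + π * ε2 * |τ| ^ 2) := by
          refine hpt.trans ?_
          have := mul_le_mul_of_nonneg_left (hφ_taylor τ) (by positivity : 0 ≤ A k t * (2 * π))
          rw [sq_abs]
          nlinarith [hA_lip τ]
        calc _ ≤ A k t * (ε1 * |τ| + π * ε2 * |τ| ^ 2) * |(σ t)⁻¹ * g (τ / σ t)| :=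
              mul_le_mul_of_nonneg_right hdiff (abs_nonneg _)
          _ = _ := by ring
    _ = A k t * lam0 g σ ε1 ε2 t := by
        rw [integral_const_mul, integral_add (hw1.const_mul _) (hw2.const_mul _),
          integral_const_mul, integral_const_mul, integral_abs_pow_mul_window ht,
          integral_abs_pow_mul_window ht, lam0]
        ring

end Component

theorem norm_sum_sub_le_of_norm_sub_le {ι E : Type*} [NormedAddCommGroup E] [DecidableEq ι]
    {s : Finset ι} {l : ι} (hl : l ∈ s) (v m : ι → E) {e : ι → ℝ}
    (h : ∀ k ∈ s, ‖v k - m k‖ ≤ e k) :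
    ‖∑ k ∈ s, v k - m l‖ ≤ ∑ k ∈ s, e k + ∑ k ∈ s.erase l, ‖m k‖ := by
  have hsplit : ∑ k ∈ s, v k - m l = ∑ k ∈ s, (v k - m k) + ∑ k ∈ s.erase l, m k := by
    rw [Finset.sum_sub_distrib, ← Finset.add_sum_erase s m hl]
    abel
  rw [hsplit]
  exact (norm_add_le _ _).trans
    (add_le_add ((norm_sum_le _ _).trans (Finset.sum_le_sum h)) (norm_sum_le _ _))

theorem one_le_abs_natCast_sub_natCast {k l : ℕ} (h : k ≠ l) : 1 ≤ |(l : ℝ) - k| := by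
  have : (1 : ℤ) ≤ |(l : ℤ) - k| := Int.one_le_abs (sub_ne_zero.mpr (by omega))
  exact_mod_cast this

theorem sub_mul_le_sub_of_le_sub_succ {f : ℕ → ℝ} {d : ℝ} {K : ℕ}
    (h : ∀ j < K, d ≤ f (j + 1) - f j) {i j : ℕ} (hij : i ≤ j) (hj : j ≤ K) :
    ((j : ℝ) - i) * d ≤ f j - f i := by
  induction j, hij using Nat.le_induction with
  | base => simp
  | succ j hij ih => push_cast; linarith [ih (by omega), h j (by omega)]

theorem abs_sub_mul_le_abs_sub_of_le_sub_succ {f : ℕ → ℝ} {d : ℝ} {K : ℕ}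
    (h : ∀ j < K, d ≤ f (j + 1) - f j) {k l : ℕ} (hk : k ≤ K) (hl : l ≤ K) :
    |(l : ℝ) - k| * d ≤ |f l - f k| := by
  rcases le_total k l with hkl | hlk
  · rw [abs_of_nonneg (by simpa using hkl)]
    exact (sub_mul_le_sub_of_le_sub_succ h hkl hl).trans (le_abs_self _)
  · rw [abs_sub_comm, abs_of_nonneg (by simpa using hlk), abs_sub_comm]
    exact (sub_mul_le_sub_of_le_sub_succ h hlk hk).trans (le_abs_self _)

theorem mul_two_mul_abs_sub_sub_one_le {f : ℕ → ℝ} {K : ℕ} {s α η : ℝ} (hs : 0 < s)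
    (h : ∀ j < K, 2 * α / s ≤ f (j + 1) - f j) {k l : ℕ} (hk : k ≤ K) (hl : l ≤ K)
    (hη : |η - f l| < α / s) :
    α * (2 * |(l : ℝ) - k| - 1) ≤ |s * (η - f k)| := by
  have hgap := abs_sub_mul_le_abs_sub_of_le_sub_succ h hk hl
  have htri : |f l - f k| - |η - f l| ≤ |η - f k| := by
    simpa [abs_sub_comm] using abs_sub_abs_le_abs_sub (f l - f k) (f l - η)
  rw [abs_mul, abs_of_pos hs]
  rw [lt_div_iff₀ hs] at hη
  rw [mul_div_assoc', div_le_iff₀ hs] at hgap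
  nlinarith

theorem apply_abs_of_even {F : ℝ → ℝ} (heven : ∀ ξ, F (-ξ) = F ξ) (ξ : ℝ) : F |ξ| = F ξ := by
  rcases abs_choice ξ with h | h <;> simp [h, heven]

theorem apply_le_of_le_abs {F : ℝ → ℝ} (heven : ∀ ξ, F (-ξ) = F ξ)
    (hdec : ∀ a b, 0 ≤ a → a ≤ b → F b ≤ F a) {a ξ : ℝ} (ha : 0 ≤ a) (h : a ≤ |ξ|) :
    F ξ ≤ F a :=
  apply_abs_of_even heven ξ ▸ hdec a |ξ| ha h

theorem le_apply_of_leftInverse {F Finv : ℝ → ℝ} (hF : Continuous F)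
    (hinv : ∀ ξ, 0 ≤ ξ → Finv (F ξ) = ξ) {ξ₀ α B : ℝ} (h₀ : 0 ≤ ξ₀) (hα : ξ₀ ≤ α)
    (hB : B ∈ Set.Icc (F α) (F ξ₀)) : ξ₀ ≤ Finv B := by
  obtain ⟨ξ, hξ, rfl⟩ := intermediate_value_Icc' hα hF.continuousOn hB
  rw [hinv ξ (h₀.trans hξ.1)]
  exact hξ.1

section Signal

variable {K : ℕ} {A φ : ℕ → ℝ → ℝ} {x : ℝ → ℂ} {g σ : ℝ → ℝ} {t α ε1 ε2 : ℝ}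

theorem norm_aSTFT_sub_le (hx : ∀ s, x s = ∑ k ∈ Finset.range (K + 1), xcomp A φ k s)
    (ht : 0 < σ t) (hA : ∀ k ≤ K, Continuous (A k)) (hA_bdd : ∀ k ≤ K, ∃ C, ∀ s, |A k s| ≤ C)
    (hφ : ∀ k ≤ K, Continuous (φ k)) (hAt : ∀ k ≤ K, 0 ≤ A k t)
    (hA_lip : ∀ k ≤ K, ∀ τ, |A k (t + τ) - A k t| ≤ ε1 * |τ| * A k t)
    (hφ_taylor : ∀ k ≤ K, ∀ τ, |φ k (t + τ) - φ k t - deriv (φ k) t * τ| ≤ ε2 * τ ^ 2 / 2)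
    (hg : Integrable g) (hg1 : Integrable fun τ => τ * g τ)
    (hg2 : Integrable fun τ => τ ^ 2 * g τ) {l : ℕ} (hl : l ≤ K) (η : ℝ) :
    ‖aSTFT x g σ t η - xcomp A φ l t * hatg g (σ t * (η - deriv (φ l) t))‖ ≤
      Msum K A t * lam0 g σ ε1 ε2 t + ∑ k ∈ (Finset.range (K + 1)).erase l,
        A k t * ‖hatg g (σ t * (η - deriv (φ k) t))‖ := by
  have hint : ∀ k ∈ Finset.range (K + 1), Integrable (aSTFTIntegrand (xcomp A φ k) g σ t η) := by
    intro k hk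
    rw [Finset.mem_range_succ_iff] at hk
    obtain ⟨C, hC⟩ := hA_bdd k hk
    exact integrable_aSTFTIntegrand (continuous_xcomp (hA k hk) (hφ k hk))
      (fun s => (norm_xcomp A φ k s).trans_le (hC s)) hg ht.ne' η
  rw [funext hx, aSTFT_finset_sum _ _ hint, Msum, Finset.sum_mul]
  refine (norm_sum_sub_le_of_norm_sub_le (Finset.mem_range_succ_iff.mpr hl)
    (fun k => aSTFT (xcomp A φ k) g σ t η)
    (fun k => xcomp A φ k t * hatg g (σ t * (η - deriv (φ k) t)))
    (e := fun k => A k t * lam0 g σ ε1 ε2 t) fun k hk => ?_).trans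
    (le_of_eq ?_)
  · rw [Finset.mem_range_succ_iff] at hk
    obtain ⟨C, hC⟩ := hA_bdd k hk
    exact norm_aSTFT_xcomp_sub_le ht (hA k hk) hC (hφ k hk) (hAt k hk) (hA_lip k hk)
      (hφ_taylor k hk) hg hg1 hg2 η
  · congr 1
    refine Finset.sum_congr rfl fun k hk => ?_
    rw [norm_mul, norm_xcomp, abs_of_nonneg
      (hAt k (Finset.mem_range_succ_iff.mp (Finset.mem_of_mem_erase hk)))]

end Signal

section Leakage

variable {K : ℕ} {A φ : ℕ → ℝ → ℝ} {g σ : ℝ → ℝ} {t α ε1 ε2 : ℝ}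

theorem div_le_deriv_succ_sub_deriv (hφ0 : ∀ s, φ 0 s = 0)
    (hφ'pos : ∀ k, 1 ≤ k → k ≤ K → ∃ c > 0, ∀ s, c ≤ deriv (φ k) s)
    (hfreq : ∃ d > 0, ∀ k, 2 ≤ k → k ≤ K → ∀ s, d ≤ deriv (φ k) s - deriv (φ (k - 1)) s)
    (hsep : ∀ s, ∀ k, 1 ≤ k → k ≤ K → 2 * α / (deriv (φ k) s - deriv (φ (k - 1)) s) ≤ σ s)
    (ht : 0 < σ t) : ∀ j < K, 2 * α / σ t ≤ deriv (φ (j + 1)) t - deriv (φ j) t := by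
  intro j hj
  have hgap : 0 < deriv (φ (j + 1)) t - deriv (φ j) t := by
    rcases Nat.eq_zero_or_pos j with rfl | hj0
    · obtain ⟨c, hc, hcle⟩ := hφ'pos 1 le_rfl (by omega)
      simpa [show φ 0 = fun _ => 0 from funext hφ0] using hc.trans_le (hcle t)
    · obtain ⟨d, hd, hdle⟩ := hfreq
      exact hd.trans_le (hdle (j + 1) (by omega) (by omega) t)
  have := hsep t (j + 1) (by omega) (by omega)
  rw [Nat.add_sub_cancel, div_le_iff₀ hgap] at this
  rw [div_le_iff₀ ht]
  linarith

theorem sum_erase_mul_norm_hatg_le (ht : 0 < σ t) (hα : 0 ≤ α) (hAt : ∀ k ≤ K, 0 ≤ A k t)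
    (hgeven : ∀ ξ, ‖hatg g (-ξ)‖ = ‖hatg g ξ‖)
    (hgdec : ∀ ξ1 ξ2, 0 ≤ ξ1 → ξ1 ≤ ξ2 → ‖hatg g ξ2‖ ≤ ‖hatg g ξ1‖)
    (hstep : ∀ j < K, 2 * α / σ t ≤ deriv (φ (j + 1)) t - deriv (φ j) t) {l : ℕ} (hl : l ≤ K)
    {η : ℝ} (hη : |η - deriv (φ l) t| < α / σ t) :
    ∑ k ∈ (Finset.range (K + 1)).erase l, A k t * ‖hatg g (σ t * (η - deriv (φ k) t))‖ ≤
      ∑ k ∈ (Finset.range (K + 1)).erase l,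
        A k t * ‖hatg g (α * (2 * |(l : ℝ) - (k : ℝ)| - 1))‖ := by
  refine Finset.sum_le_sum fun k hk => ?_
  have hkK := Finset.mem_range_succ_iff.mp (Finset.mem_of_mem_erase hk)
  have hkl := one_le_abs_natCast_sub_natCast (Finset.ne_of_mem_erase hk)
  have hgap := mul_two_mul_abs_sub_sub_one_le (f := fun j => deriv (φ j) t) ht hstep hkK hl hη
  exact mul_le_mul_of_nonneg_left
    (apply_le_of_le_abs (F := fun ξ => ‖hatg g ξ‖) hgeven hgdec (by nlinarith) hgap) (hAt k hkK)

theorem errl_le (hα : 0 ≤ α) (hAt : ∀ k ≤ K, 0 ≤ A k t)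
    (hgdec : ∀ ξ1 ξ2, 0 ≤ ξ1 → ξ1 ≤ ξ2 → ‖hatg g ξ2‖ ≤ ‖hatg g ξ1‖) {l : ℕ} (hl : l ≤ K) :
    errl K A g σ α ε1 ε2 l t ≤
      Msum K A t * lam0 g σ ε1 ε2 t + (Msum K A t - A l t) * ‖hatg g α‖ := by
  rw [errl, Msum, ← Finset.sum_erase_eq_sub (Finset.mem_range_succ_iff.mpr hl)]
  gcongr
  rw [Finset.sum_mul]
  refine Finset.sum_le_sum fun k hk => mul_le_mul_of_nonneg_left ?_
    (hAt k (Finset.mem_range_succ_iff.mp (Finset.mem_of_mem_erase hk)))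
  have hkl := one_le_abs_natCast_sub_natCast (Finset.ne_of_mem_erase hk)
  exact hgdec α _ hα (by nlinarith)

end Leakage

theorem one_sub_two_mul_div_le_of_norm_sub_le {u v c z : ℂ} {a err : ℝ} (ha : 0 < a)
    (hc : ‖c‖ = a) (hu : a - err ≤ ‖u‖) (huv : ‖u‖ ≤ ‖v‖) (hv : ‖v - c * z‖ ≤ err) :
    1 - 2 * err / a ≤ ‖z‖ := by
  have hvz : ‖v‖ ≤ a * ‖z‖ + err := by
    have := norm_le_norm_add_norm_sub' v (c * z)
    rw [norm_mul, hc] at this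
    linarith
  rw [sub_le_iff_le_add, ← sub_le_iff_le_add', le_div_iff₀ ha]
  nlinarith
theorem abs_sub_le_inv_mul_of_peak {g : ℝ → ℝ} (hg : Integrable g)
    (hgeven : ∀ ξ, ‖hatg g (-ξ)‖ = ‖hatg g ξ‖) {ginv : ℝ → ℝ}
    (hginv : ∀ ξ, 0 ≤ ξ → ginv ‖hatg g ξ‖ = ξ) {u v c : ℂ} {a err s α ν η : ℝ} (ha : 0 < a)
    (hc : ‖c‖ = a) (hs : 0 < s) (hu : a - err ≤ ‖u‖) (huv : ‖u‖ ≤ ‖v‖)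
    (hv : ‖v - c * hatg g (s * (η - ν))‖ ≤ err) (hη : |η - ν| < α / s)
    (hα : ‖hatg g α‖ ≤ 1 - 2 * err / a) :
    |η - ν| ≤ s⁻¹ * ginv (1 - 2 * err / a) := by
  have hpeak := one_sub_two_mul_div_le_of_norm_sub_le ha hc hu huv hv
  rw [← apply_abs_of_even (F := fun ξ => ‖hatg g ξ‖) hgeven] at hpeak
  rw [lt_div_iff₀ hs] at hη
  have hξ := le_apply_of_leftInverse (continuous_hatg hg).norm hginv
    (ξ₀ := |s * (η - ν)|) (α := α) (abs_nonneg _) (by rw [abs_mul, abs_of_pos hs]; linarith)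
    ⟨hα, hpeak⟩
  rw [abs_mul, abs_of_pos hs] at hξ
  rwa [inv_mul_eq_div, le_div_iff₀' hs]

theorem abs_phase_sub_sub_deriv_mul_le {K : ℕ} {φ : ℕ → ℝ → ℝ} {ε2 : ℝ} (hε2 : 0 ≤ ε2)
    (hφ : ∀ k ≤ K, ContDiff ℝ 2 (φ k)) (hφ0 : ∀ s, φ 0 s = 0)
    (hφ'' : ∀ k, 1 ≤ k → k ≤ K → ∀ s, |deriv (deriv (φ k)) s| ≤ ε2) (t : ℝ) :
    ∀ k ≤ K, ∀ τ, |φ k (t + τ) - φ k t - deriv (φ k) t * τ| ≤ ε2 * τ ^ 2 / 2 := by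
  intro k hk τ
  rcases Nat.eq_zero_or_pos k with rfl | hk0
  · simp only [show φ 0 = fun _ => 0 from funext hφ0, sub_self, deriv_const', zero_mul,
      abs_zero]
    positivity
  · exact abs_sub_sub_deriv_mul_le (hφ k hk) (hφ'' k hk0 hk) t τ

theorem thm2_1b_general (K : ℕ) (A φ : ℕ → ℝ → ℝ) (ε1 ε2 : ℝ) (x : ℝ → ℂ)
    (g : ℝ → ℝ) (σ : ℝ → ℝ) (τ0 α t epst : ℝ)
    (hε2 : 0 < ε2)
    (hAreg : ∀ k ≤ K, ContDiff ℝ 1 (A k))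
    (hAbdd : ∀ k ≤ K, ∃ C, ∀ s, |A k s| ≤ C)
    (hφreg : ∀ k ≤ K, ContDiff ℝ 2 (φ k))
    (hφ0 : ∀ s, φ 0 s = 0)
    (hApos : ∀ k ≤ K, ∀ s, 0 < A k s)
    (hφ'pos : ∀ k, 1 ≤ k → k ≤ K → ∃ c > 0, ∀ s, c ≤ deriv (φ k) s)
    (hfreq : ∃ d > 0, ∀ k, 2 ≤ k → k ≤ K → ∀ s, d ≤ deriv (φ k) s - deriv (φ (k - 1)) s)
    (hAlip : ∀ k ≤ K, ∀ s τ, |A k (s + τ) - A k s| ≤ ε1 * |τ| * A k s)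
    (hφ'' : ∀ k, 1 ≤ k → k ≤ K → ∀ s, |deriv (deriv (φ k)) s| ≤ ε2)
    (hx : ∀ s, x s = ∑ k ∈ Finset.range (K + 1), xcomp A φ k s)
    (hgint : Integrable g)
    (hgI1 : Integrable fun τ : ℝ => τ * g τ)
    (hgI2 : Integrable fun τ : ℝ => τ ^ 2 * g τ)
    (hgnorm : (∫ τ : ℝ, g τ) = 1)
    (hgeven : ∀ ξ, ‖hatg g (-ξ)‖ = ‖hatg g ξ‖)
    (hgdec : ∀ ξ1 ξ2, 0 ≤ ξ1 → ξ1 ≤ ξ2 → ‖hatg g ξ2‖ ≤ ‖hatg g ξ1‖)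
    (hτ0 : 0 < τ0)
    (hα : 0 < α) (hgα : ‖hatg g α‖ = τ0)
    (hσ : ∀ s, 0 < σ s)
    (hsep : ∀ s, ∀ k, 1 ≤ k → k ≤ K →
      2 * α / (deriv (φ k) s - deriv (φ (k - 1)) s) ≤ σ s)
    (hmain : 2 * Msum K A t * (τ0 + lam0 g σ ε1 ε2 t) ≤ muMin K A t)
    (heps2 : epst ≤ muMin K A t - Msum K A t * (τ0 + lam0 g σ ε1 ε2 t))
    (ginv : ℝ → ℝ)
    (hginv : ∀ ξ, 0 ≤ ξ → ginv ‖hatg g ξ‖ = ξ)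
    (ηhat : ℕ → ℝ)
    (hηmem : ∀ l, 1 ≤ l → l ≤ K → ηhat l ∈ Gtk x g σ φ α t epst l)
    (hηmax : ∀ l, 1 ≤ l → l ≤ K → ∀ η ∈ Gtk x g σ φ α t epst l,
      ‖aSTFT x g σ t η‖ ≤ ‖aSTFT x g σ t (ηhat l)‖)
    :
    ∀ l, 1 ≤ l → l ≤ K →
      |ηhat l - deriv (φ l) t| ≤
        (σ t)⁻¹ * ginv (1 - 2 * errl K A g σ α ε1 ε2 l t / A l t) := by
  intro l hl1 hlK
  have ht := hσ t
  have hAl := hApos l hlK t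
  have hAt : ∀ k ≤ K, 0 ≤ A k t := fun k hk => (hApos k hk t).le
  have happrox : ∀ η, |η - deriv (φ l) t| < α / σ t →
      ‖aSTFT x g σ t η - xcomp A φ l t * hatg g (σ t * (η - deriv (φ l) t))‖ ≤
        errl K A g σ α ε1 ε2 l t := fun η hη =>
    (norm_aSTFT_sub_le hx ht (fun k hk => (hAreg k hk).continuous) hAbdd
      (fun k hk => (hφreg k hk).continuous) hAt (fun k hk => hAlip k hk t)
      (abs_phase_sub_sub_deriv_mul_le hε2.le hφreg hφ0 hφ'' t) hgint hgI1 hgI2 hlK η).trans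
    (add_le_add_right (sum_erase_mul_norm_hatg_le ht hα.le hAt hgeven hgdec
      (div_le_deriv_succ_sub_deriv hφ0 hφ'pos hfreq hsep ht) hlK hη) _)
  have herr := errl_le (σ := σ) (ε1 := ε1) (ε2 := ε2) hα.le hAt hgdec hlK
  rw [hgα] at herr
  have hμ : muMin K A t ≤ A l t := Finset.inf'_le _ (Finset.mem_range_succ_iff.mpr hlK)
  have hcenter_win : |deriv (φ l) t - deriv (φ l) t| < α / σ t := by simpa using div_pos hα ht
  have hxl : ‖xcomp A φ l t‖ = A l t := (norm_xcomp A φ l t).trans (abs_of_pos hAl)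
  have hcenter : A l t - errl K A g σ α ε1 ε2 l t ≤ ‖aSTFT x g σ t (deriv (φ l) t)‖ := by
    have h := happrox _ hcenter_win
    rw [sub_self, mul_zero, hatg_zero hgnorm, mul_one] at h
    linarith [norm_le_norm_add_norm_sub (aSTFT x g σ t (deriv (φ l) t)) (xcomp A φ l t)]
  have hmem : deriv (φ l) t ∈ Gtk x g σ φ α t epst l :=
    ⟨show epst < _ by nlinarith [mul_pos hAl hτ0], hcenter_win⟩
  refine abs_sub_le_inv_mul_of_peak hgint hgeven hginv hAl hxl ht hcenter
    (hηmax l hl1 hlK _ hmem) (happrox _ (hηmem l hl1 hlK).2) (hηmem l hl1 hlK).2 ?_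
  -- `herr`, `hmain` and `hμ` give `2 err_ℓ ≤ A_ℓ (1 - 2 τ0)`
  rw [hgα, le_sub_comm, div_le_iff₀ hAl]
  nlinarith [mul_pos hAl hτ0]

theorem thm2_1b (K : ℕ) (A φ : ℕ → ℝ → ℝ) (ε1 ε2 : ℝ) (x : ℝ → ℂ)
    (g : ℝ → ℝ) (σ : ℝ → ℝ) (τ0 α t epst : ℝ)
    (hε1 : 0 < ε1) (hε2 : 0 < ε2)
    (hAreg : ∀ k ≤ K, ContDiff ℝ 1 (A k))
    (hAbdd : ∀ k ≤ K, ∃ C, ∀ s, |A k s| ≤ C)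
    (hφreg : ∀ k ≤ K, ContDiff ℝ 2 (φ k))
    (hφ0 : ∀ s, φ 0 s = 0)
    (hApos : ∀ k ≤ K, ∀ s, 0 < A k s)
    (hφ'pos : ∀ k, 1 ≤ k → k ≤ K → ∃ c > 0, ∀ s, c ≤ deriv (φ k) s)
    (hφ'bdd : ∀ k, 1 ≤ k → k ≤ K → ∃ C, ∀ s, deriv (φ k) s ≤ C)
    (hfreq : ∃ d > 0, ∀ k, 2 ≤ k → k ≤ K → ∀ s, d ≤ deriv (φ k) s - deriv (φ (k - 1)) s)
    (hAlip : ∀ k ≤ K, ∀ s τ, |A k (s + τ) - A k s| ≤ ε1 * |τ| * A k s)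
    (hφ'' : ∀ k, 1 ≤ k → k ≤ K → ∀ s, |deriv (deriv (φ k)) s| ≤ ε2)
    (hx : ∀ s, x s = ∑ k ∈ Finset.range (K + 1), xcomp A φ k s)
    (hgint : Integrable g)
    (hgL2 : MemLp g 2 (volume : Measure ℝ))
    (hgI1 : Integrable fun τ : ℝ => τ * g τ)
    (hgI2 : Integrable fun τ : ℝ => τ ^ 2 * g τ)
    (hgnorm : (∫ τ : ℝ, g τ) = 1)
    (hgeven : ∀ ξ, ‖hatg g (-ξ)‖ = ‖hatg g ξ‖)
    (hgdec : ∀ ξ1 ξ2, 0 ≤ ξ1 → ξ1 ≤ ξ2 → ‖hatg g ξ2‖ ≤ ‖hatg g ξ1‖)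
    (hτ0 : 0 < τ0) (hτ0' : τ0 < 1)
    (hα : 0 < α) (hgα : ‖hatg g α‖ = τ0)
    (hσ : ∀ s, 0 < σ s)
    (hsep : ∀ s, ∀ k, 1 ≤ k → k ≤ K →
      2 * α / (deriv (φ k) s - deriv (φ (k - 1)) s) ≤ σ s)
    (hmain : 2 * Msum K A t * (τ0 + lam0 g σ ε1 ε2 t) ≤ muMin K A t)
    (heps1 : Msum K A t * (τ0 + lam0 g σ ε1 ε2 t) ≤ epst)
    (heps2 : epst ≤ muMin K A t - Msum K A t * (τ0 + lam0 g σ ε1 ε2 t))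
    (ginv : ℝ → ℝ)
    (hginv : ∀ ξ, 0 ≤ ξ → ginv ‖hatg g ξ‖ = ξ)
    (ηhat : ℕ → ℝ)
    (hηmem : ∀ l, 1 ≤ l → l ≤ K → ηhat l ∈ Gtk x g σ φ α t epst l)
    (hηmax : ∀ l, 1 ≤ l → l ≤ K → ∀ η ∈ Gtk x g σ φ α t epst l,
      ‖aSTFT x g σ t η‖ ≤ ‖aSTFT x g σ t (ηhat l)‖)
    :
    ∀ l, 1 ≤ l → l ≤ K →
      |ηhat l - deriv (φ l) t| ≤
        (σ t)⁻¹ * ginv (1 - 2 * errl K A g σ α ε1 ε2 l t / A l t) :=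
  thm2_1b_general K A φ ε1 ε2 x g σ τ0 α t epst hε2 hAreg hAbdd hφreg hφ0 hApos hφ'pos hfreq hAlip
    hφ'' hx hgint hgI1 hgI2 hgnorm hgeven hgdec hτ0 hα hgα hσ hsep hmain heps2 ginv hginv ηhat hηmem
    hηmax
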